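/- arXiv:1010.5477 — 7 statements merged into one kernel-verified Lean document; each statement's English description precedes it below -/
import Mathlib

section
/- If Y is dispensable in the hypergraph H, then H is connected if and only if H ∪ {Y} is connected. -/
namespace HG

variable {α : Type*} [DecidableEq α]

/-- The carrier of a hypergraph: the union of its members. -/
def carrier (H : Finset (Finset α)) : Finset α := H.sup id

/-- A hypergraph (on its carrier) is a finite family of sets not containing `∅`. -/
def IsHypergraph (H : Finset (Finset α)) : Prop := ∅ ∉ H

/-- The restriction `H_Y = {X ∈ H ∣ X ⊆ Y}`. -/
def restrict (H : Finset (Finset α)) (Y : Finset α) : Finset (Finset α) :=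
  H.filter (· ⊆ Y)

/-- `x` and `y` are joined by a path of `H`: a nonempty sequence of distinct members
of `H`, consecutive members intersecting, the first containing `x`, the last `y`. -/
def Joined (H : Finset (Finset α)) (x y : α) : Prop :=
  ∃ (X : Finset α) (l : List (Finset α)),
    (X :: l).Nodup ∧ (∀ Z ∈ X :: l, Z ∈ H) ∧
    (X :: l).Chain' (fun A B => (A ∩ B).Nonempty) ∧
    x ∈ X ∧ y ∈ (X :: l).getLast (List.cons_ne_nil X l)

/-- Path-connectedness of a hypergraph: any two carrier elements are joined. -/
def Conn (H : Finset (Finset α)) : Prop :=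
  ∀ x ∈ carrier H, ∀ y ∈ carrier H, Joined H x y

/-- `P` is a hypergraph partition of `H`: a partition of `H` whose family of
carriers is a partition of the carrier of `H`. -/
def IsHGPartition (H : Finset (Finset α)) (P : Finset (Finset (Finset α))) : Prop :=
  (∀ Q ∈ P, Q ≠ ∅) ∧
  (∀ Q ∈ P, ∀ Q' ∈ P, Q ≠ Q' → Disjoint Q Q') ∧
  P.sup id = H ∧
  (∀ Q ∈ P, ∀ Q' ∈ P, Q ≠ Q' → Disjoint (carrier Q) (carrier Q'))

/-- A hypergraph is atomic when it contains all singletons of carrier elements. -/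
def Atomic (H : Finset (Finset α)) : Prop := ∀ x ∈ carrier H, {x} ∈ H

/-- A hypergraph is saturated when intersecting members have their union in it. -/
def Saturated (H : Finset (Finset α)) : Prop :=
  ∀ X ∈ H, ∀ Y ∈ H, (X ∩ Y).Nonempty → X ∪ Y ∈ H

/-- `Y` is dispensable in `H` when `(H_Y) \ {Y}` is a connected hypergraph on `Y`. -/
def Dispensable (H : Finset (Finset α)) (Y : Finset α) : Prop :=
  IsHypergraph ((restrict H Y).erase Y) ∧
  carrier ((restrict H Y).erase Y) = Y ∧
  Conn ((restrict H Y).erase Y)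

/-- `J` enhances `H` when `J = H ∪ {Y}` for some `Y ∉ H` dispensable in `H`. -/
def Enhances (J H : Finset (Finset α)) : Prop :=
  ∃ Y, Dispensable H Y ∧ Y ∉ H ∧ J = insert Y H

/-- Cognation: the equivalence closure of the enhancement relation. -/
def Cognate (H J : Finset (Finset α)) : Prop :=
  Relation.EqvGen Enhances H J

/-- The finest hypergraph partition: one all of whose parts are connected. -/
def FinestHGPartition (H : Finset (Finset α)) (P : Finset (Finset (Finset α))) : Prop :=
  IsHGPartition H P ∧ ∀ Q ∈ P, Conn Q

/-- Constructions of a hypergraph, defined recursively. -/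
inductive IsConstruction : Finset (Finset α) → Finset (Finset α) → Prop
  | empty : IsConstruction ∅ ∅
  | conn {H K : Finset (Finset α)} {x : α} :
      (carrier H).Nonempty → Conn H → x ∈ carrier H →
      IsConstruction (restrict H ((carrier H).erase x)) K →
      IsConstruction H (insert (carrier H) K)
  | parts {H : Finset (Finset α)} {P : Finset (Finset (Finset α))}
      {K : Finset (Finset α) → Finset (Finset α)} :
      2 ≤ (carrier H).card → ¬ Conn H → 2 ≤ P.card → FinestHGPartition H P →
      (∀ Q ∈ P, IsConstruction Q (K Q)) →
      IsConstruction H (P.sup K)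

/-- An `M`-antichain: at least two members of `M`, pairwise incomparable. -/
def IsAntichainIn (M S : Finset (Finset α)) : Prop :=
  S ⊆ M ∧ 2 ≤ S.card ∧ ∀ X ∈ S, ∀ Y ∈ S, X ≠ Y → ¬ X ⊆ Y ∧ ¬ Y ⊆ X

/-- `S` misses `H` when the union of `S` is not a member of `H`. -/
def Misses (H S : Finset (Finset α)) : Prop := S.sup id ∉ H

/-- `x` is `X`-superficial relative to `M`. -/
def Superficial (M : Finset (Finset α)) (X : Finset α) (x : α) : Prop :=
  x ∈ X ∧ ∀ Y ∈ M, Y ⊂ X → x ∉ Y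

/-- ASC-hypergraph: atomic, saturated and connected hypergraph. -/
def ASC (H : Finset (Finset α)) : Prop :=
  IsHypergraph H ∧ Atomic H ∧ Saturated H ∧ Conn H

end HG

/-!
A path of `H` from `x` to `y` exists exactly when `y` is reachable from `x` by steps inside single
members of `H`: any such chain of steps can be made into a path without repeated members by cutting
out loops. Since `Y` is dispensable, any step inside `Y` can be replaced by a chain of steps inside
members of `H` contained in `Y`, and `Y` adds no new points to the carrier; so inserting `Y` changes
neither the carrier nor reachability.
-/

namespace HG

variable {α : Type*} {H J : Finset (Finset α)} {Y Z : Finset α} {x y z : α}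

open Relation

def Adj (H : Finset (Finset α)) (x y : α) : Prop := ∃ Z ∈ H, x ∈ Z ∧ y ∈ Z

lemma Adj.mono (h : H ⊆ J) (hxy : Adj H x y) : Adj J x y :=
  let ⟨Z, hZ, hx, hy⟩ := hxy
  ⟨Z, h hZ, hx, hy⟩

variable [DecidableEq α]

lemma mem_carrier : x ∈ carrier H ↔ ∃ Z ∈ H, x ∈ Z := by
  simp [carrier, Finset.mem_sup]

lemma carrier_mono (h : H ⊆ J) : carrier H ⊆ carrier J :=
  Finset.sup_mono h

lemma carrier_insert_of_subset (hY : Y ⊆ carrier H) : carrier (insert Y H) = carrier H := by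
  rw [carrier, Finset.sup_insert]
  exact sup_eq_right.2 hY

lemma Joined.refl (hx : x ∈ carrier H) : Joined H x x :=
  let ⟨Z, hZ, hxZ⟩ := mem_carrier.1 hx
  ⟨Z, [], by simp, by simpa using hZ, List.isChain_singleton _, hxZ, hxZ⟩

lemma Joined.prepend (h : Joined H y z) (hZ : Z ∈ H) (hx : x ∈ Z) (hy : y ∈ Z) :
    Joined H x z := by
  obtain ⟨X, l, hnodup, hmem, hchain, hyX, hz⟩ := h
  by_cases hZl : Z ∈ X :: l
  · -- `Z` already occurs on the path: restart the path there, so that no member repeats.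
    obtain ⟨s, t, hst⟩ := List.append_of_mem hZl
    have hsuffix : (Z :: t) <:+ X :: l := hst ▸ List.suffix_append s (Z :: t)
    refine ⟨Z, t, hnodup.sublist hsuffix.sublist, fun W hW => hmem W (hsuffix.subset hW),
      hchain.suffix hsuffix, hx, ?_⟩
    simpa only [hst, List.getLast_append_of_ne_nil _ (List.cons_ne_nil Z t)] using hz
  · refine ⟨Z, X :: l, List.nodup_cons.2 ⟨hZl, hnodup⟩, ?_,
      hchain.cons_cons ⟨y, Finset.mem_inter.2 ⟨hy, hyX⟩⟩, hx, ?_⟩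
    · exact List.forall_mem_cons.2 ⟨hZ, hmem⟩
    · rwa [List.getLast_cons (List.cons_ne_nil X l)]

lemma Joined.reflTransGen (h : Joined H x y) : ReflTransGen (Adj H) x y := by
  obtain ⟨X, l, -, hmem, hchain, hxX, hy⟩ := h
  induction l generalizing X x with
  | nil => exact ReflTransGen.single ⟨X, hmem X (by simp), hxX, hy⟩
  | cons W l ih =>
    obtain ⟨⟨w, hw⟩, hchain⟩ := List.isChain_cons_cons.1 hchain
    rw [Finset.mem_inter] at hw
    exact ReflTransGen.head ⟨X, hmem X (by simp), hxX, hw.1⟩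
      (ih W (fun Z hZ => hmem Z (List.mem_cons_of_mem _ hZ)) hchain hw.2 hy)

lemma joined_of_reflTransGen (hy : y ∈ carrier H) (h : ReflTransGen (Adj H) x y) :
    Joined H x y := by
  induction h using ReflTransGen.head_induction_on with
  | refl => exact Joined.refl hy
  | head hxc _ ih =>
    obtain ⟨Z, hZ, hx, hc⟩ := hxc
    exact ih.prepend hZ hx hc

lemma conn_iff_reflTransGen :
    Conn H ↔ ∀ x ∈ carrier H, ∀ y ∈ carrier H, ReflTransGen (Adj H) x y :=
  forall₂_congr fun _ _ => forall₂_congr fun _ hy =>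
    ⟨Joined.reflTransGen, joined_of_reflTransGen hy⟩

lemma reflTransGen_adj_insert (hY : ∀ x ∈ Y, ∀ y ∈ Y, ReflTransGen (Adj H) x y) :
    ReflTransGen (Adj (insert Y H)) x y ↔ ReflTransGen (Adj H) x y := by
  refine ⟨ReflTransGen.lift' id (fun a b hab => ?_) x y,
    ReflTransGen.mono (fun _ _ => Adj.mono (Finset.subset_insert Y H)) x y⟩
  obtain ⟨Z, hZ, ha, hb⟩ := hab
  rcases Finset.mem_insert.1 hZ with rfl | hZ
  · exact hY a ha b hb
  · exact ReflTransGen.single ⟨Z, hZ, ha, hb⟩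

lemma restrict_erase_subset (H : Finset (Finset α)) (Y : Finset α) :
    (restrict H Y).erase Y ⊆ H :=
  (Finset.erase_subset Y _).trans (Finset.filter_subset _ H)

lemma Dispensable.subset_carrier (hY : Dispensable H Y) : Y ⊆ carrier H :=
  hY.2.1 ▸ carrier_mono (restrict_erase_subset H Y)

lemma Dispensable.reflTransGen (hY : Dispensable H Y) :
    ∀ x ∈ Y, ∀ y ∈ Y, ReflTransGen (Adj H) x y := by
  obtain ⟨-, hcarrier, hconn⟩ := hY
  intro x hx y hy
  rw [← hcarrier] at hx hy
  exact ReflTransGen.mono (fun _ _ => Adj.mono (restrict_erase_subset H Y)) x y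
    (conn_iff_reflTransGen.1 hconn x hx y hy)

end HG

open HG

theorem connected_iff_insert_dispensable_connected_general
    {α : Type*} [DecidableEq α]
    (H : Finset (Finset α))
    (Y : Finset α) (hY : Dispensable H Y) :
    Conn H ↔ Conn (insert Y H) := by
  simp only [conn_iff_reflTransGen, carrier_insert_of_subset hY.subset_carrier,
    reflTransGen_adj_insert hY.reflTransGen]

theorem connected_iff_insert_dispensable_connected
    {α : Type*} [DecidableEq α]
    (H : Finset (Finset α)) (hH : IsHypergraph H)
    (Y : Finset α) (hY : Dispensable H Y) :
    Conn H ↔ Conn (insert Y H) :=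
  connected_iff_insert_dispensable_connected_general H Y hY
end

section
/- Let H be an atomic, saturated, connected hypergraph and M ⊆ H such that every M-antichain misses H. Then every M-antichain is pairwise disjoint. -/
open HG

theorem antichain_pairwise_disjoint
    {α : Type*} [DecidableEq α]
    (H M : Finset (Finset α)) (hH : ASC H) (hM : M ⊆ H)
    (hmiss : ∀ S, IsAntichainIn M S → Misses H S) :
    ∀ S, IsAntichainIn M S → ∀ X ∈ S, ∀ Y ∈ S, X ≠ Y → Disjoint X Y := by
  intro S hS X hX Y hY hXY
  by_contra hdisj
  obtain ⟨hSM, -, hanti⟩ := hS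
  have hXM := hSM hX
  have hYM := hSM hY
  have hne : (X ∩ Y).Nonempty := Finset.not_disjoint_iff_nonempty_inter.mp hdisj
  have hunion : X ∪ Y ∈ H := hH.2.2.1 X (hM hXM) Y (hM hYM) hne
  have hpair : IsAntichainIn M {X, Y} := by
    refine ⟨?_, ?_, ?_⟩
    · intro Z hZ
      simp only [Finset.mem_insert, Finset.mem_singleton] at hZ
      rcases hZ with rfl | rfl <;> assumption
    · rw [Finset.card_insert_of_notMem (by simpa using hXY), Finset.card_singleton]
    · intro A hA B hB hAB
      simp only [Finset.mem_insert, Finset.mem_singleton] at hA hB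
      rcases hA with rfl | rfl <;> rcases hB with rfl | rfl
      · exact absurd rfl hAB
      · exact hanti A hX B hY hAB
      · exact hanti A hY B hX hAB
      · exact absurd rfl hAB
  have := hmiss _ hpair
  apply this
  have : ({X, Y} : Finset (Finset α)).sup id = X ∪ Y := by
    simp [Finset.sup_insert, Finset.sup_singleton]
  rw [this]
  exact hunion
end

section
/- Let H be an ASC-hypergraph and M ⊆ H such that every M-antichain misses H. Then every X ∈ M has at least one X-superficial element, i.e., an element x ∈ X such that no proper subset of X belonging to M contains x. -/
/-!
If `X ∈ M` had no superficial element, the maximal members of `M` properly contained in `X`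
would cover `X`. They are pairwise incomparable, and there are at least two of them since each
is a proper subset of the nonempty set `X`; so they form an `M`-antichain whose union `X` lies
in `H`, which no `M`-antichain's union may.
-/

namespace HG

variable {α : Type*}

lemma isAntichainIn_of_isAntichain {M S : Finset (Finset α)} (hSM : S ⊆ M) (hS : 2 ≤ S.card)
    (hanti : IsAntichain (· ⊆ ·) (S : Set (Finset α))) : IsAntichainIn M S :=
  ⟨hSM, hS, fun _ hX _ hY hXY => ⟨hanti hX hY hXY, hanti hY hX hXY.symm⟩⟩

lemma sup_ssubset_eq_of_forall_not_superficial [DecidableEq α] {M : Finset (Finset α)}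
    {X : Finset α} (h : ∀ x, ¬ Superficial M X x) : (M.filter (· ⊂ X)).sup id = X := by
  refine le_antisymm (Finset.sup_le fun Y hY => (Finset.mem_filter.1 hY).2.le) fun x hx => ?_
  obtain ⟨Y, hYM, hYX, hxY⟩ : ∃ Y ∈ M, Y ⊂ X ∧ x ∈ Y := by
    simpa [Superficial, hx] using h x
  exact Finset.mem_sup.2 ⟨Y, Finset.mem_filter.2 ⟨hYM, hYX⟩, hxY⟩

end HG

namespace Finset

variable {β : Type*} [SemilatticeSup β] [OrderBot β]

lemma sup_filter_maximal (T : Finset β) [DecidablePred (Maximal (· ∈ T))] :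
    (T.filter (Maximal (· ∈ T))).sup id = T.sup id := by
  refine le_antisymm (sup_mono (filter_subset _ _)) (Finset.sup_le fun y hy => ?_)
  obtain ⟨z, hyz, hz⟩ := T.exists_le_maximal hy
  exact hyz.trans (le_sup (f := id) (mem_filter.2 ⟨hz.prop, hz⟩))

lemma two_le_card_of_sup_eq {S : Finset β} {x : β} (hx : x ≠ ⊥) (hS : ∀ y ∈ S, y < x)
    (hsup : S.sup id = x) : 2 ≤ S.card := by
  by_contra! hcard
  obtain ⟨y, hy⟩ : S.Nonempty := by
    by_contra! hempty
    exact hx (by rw [← hsup, hempty, sup_empty])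
  have hxy : x ≤ y := hsup ▸ Finset.sup_le fun z hz => (card_le_one.1 (by omega) z hz y hy).le
  exact (hS y hy).not_ge hxy

end Finset

open HG

theorem exists_superficial
    {α : Type*} [DecidableEq α]
    (H M : Finset (Finset α)) (hH : ASC H) (hM : M ⊆ H)
    (hmiss : ∀ S, IsAntichainIn M S → Misses H S) :
    ∀ X ∈ M, ∃ x, Superficial M X x := by
  classical
  intro X hX
  by_contra! hno
  set T := M.filter (· ⊂ X)
  set S := T.filter (Maximal (· ∈ T))
  have hsup : S.sup id = X :=
    (Finset.sup_filter_maximal T).trans (sup_ssubset_eq_of_forall_not_superficial hno)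
  have hproper : ∀ Y ∈ S, Y ⊂ X := fun Y hY =>
    (Finset.mem_filter.1 (Finset.mem_filter.1 hY).1).2
  have hXne : X ≠ ∅ := fun h => hH.1 (h ▸ hM hX)
  have hanti : IsAntichainIn M S :=
    isAntichainIn_of_isAntichain ((Finset.filter_subset _ _).trans (Finset.filter_subset _ _))
      (Finset.two_le_card_of_sup_eq hXne hproper hsup)
      ((setOfPred_maximal_antichain _).subset fun _ hY => (Finset.mem_filter.1 hY).2)
  exact hmiss S hanti (hsup ▸ hM hX)
end

section
/- Let H be an ASC-hypergraph and M ⊆ H such that every M-antichain misses H. If X, Y ∈ M are distinct, then the set of X-superficial elements and the set of Y-superficial elements (relative to M) are disjoint. Consequently |M| ≤ |⋃H|. -/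
open HG

theorem superficial_sets_disjoint_and_card_le
    {α : Type*} [DecidableEq α]
    (H M : Finset (Finset α)) (hH : ASC H) (hM : M ⊆ H)
    (hmiss : ∀ S, IsAntichainIn M S → Misses H S) :
    (∀ X ∈ M, ∀ Y ∈ M, X ≠ Y →
      Disjoint {x | Superficial M X x} {y | Superficial M Y y}) ∧
    M.card ≤ (carrier H).card := by
  obtain ⟨hne, hAt, hSat, hConn⟩ := hH
  have hdisj : ∀ X ∈ M, ∀ Y ∈ M, X ≠ Y →
      Disjoint {x | Superficial M X x} {y | Superficial M Y y} := by
    intro X hX Y hY hXY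
    rw [Set.disjoint_left]
    rintro x ⟨hxX, hX'⟩ ⟨hxY, hY'⟩
    have hnXY : ¬ X ⊆ Y := fun h =>
      hY' X hX (Finset.ssubset_iff_subset_ne.mpr ⟨h, hXY⟩) hxX
    have hnYX : ¬ Y ⊆ X := fun h =>
      hX' Y hY (Finset.ssubset_iff_subset_ne.mpr ⟨h, hXY.symm⟩) hxY
    have hanti : IsAntichainIn M {X, Y} := by
      refine ⟨?_, ?_, ?_⟩
      · intro Z hZ
        rcases Finset.mem_insert.mp hZ with rfl | hZ
        · exact hX
        · rw [Finset.mem_singleton] at hZ; subst hZ; exact hY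
      · rw [Finset.card_pair hXY]
      · intro A hA B hB hAB
        rcases Finset.mem_insert.mp hA with rfl | hA <;>
          [skip; (rw [Finset.mem_singleton] at hA; subst hA)] <;>
        rcases Finset.mem_insert.mp hB with rfl | hB <;>
          first
          | exact absurd rfl hAB
          | (rw [Finset.mem_singleton] at hB; subst hB; first
              | exact absurd rfl hAB
              | exact ⟨hnXY, hnYX⟩
              | exact ⟨hnYX, hnXY⟩)
          | exact ⟨hnYX, hnXY⟩
          | exact ⟨hnXY, hnYX⟩
    have hmi := hmiss _ hanti
    have hsup : ({X, Y} : Finset (Finset α)).sup id = X ∪ Y := by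
      simp [Finset.sup_insert, Finset.sup_singleton]
    rw [Misses, hsup] at hmi
    exact hmi (hSat X (hM hX) Y (hM hY) ⟨x, Finset.mem_inter.mpr ⟨hxX, hxY⟩⟩)
  have hex : ∀ X ∈ M, ∃ x, Superficial M X x := by
    intro X hX
    by_contra hno
    push_neg at hno
    set S : Finset (Finset α) := M.filter (· ⊂ X) with hS
    have hSX : ∀ Y ∈ S, Y ⊂ X := fun Y hY => (Finset.mem_filter.mp hY).2
    have hSM : S ⊆ M := Finset.filter_subset _ _
    have hXS : X ⊆ S.sup id := by
      intro x hx
      have := hno x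
      rw [Superficial] at this
      push_neg at this
      obtain ⟨Y, hYM, hYX, hxY⟩ := this hx
      exact Finset.mem_sup.mpr ⟨Y, Finset.mem_filter.mpr ⟨hYM, hYX⟩, hxY⟩
    set A : Finset (Finset α) := S.filter (fun Y => ∀ Z ∈ S, ¬ Y ⊂ Z) with hA
    have hAS : A ⊆ S := Finset.filter_subset _ _
    have hmax : ∀ Y ∈ S, ∃ Z ∈ A, Y ⊆ Z := by
      intro Y hY
      set T : Finset (Finset α) := S.filter (Y ⊆ ·) with hT
      obtain ⟨Z, hZT, hZmax⟩ := T.exists_max_image Finset.card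
        ⟨Y, Finset.mem_filter.mpr ⟨hY, Finset.Subset.refl Y⟩⟩
      obtain ⟨hZS, hYZ⟩ := Finset.mem_filter.mp hZT
      refine ⟨Z, Finset.mem_filter.mpr ⟨hZS, ?_⟩, hYZ⟩
      intro W hW hZW
      have hWT : W ∈ T := Finset.mem_filter.mpr ⟨hW, hYZ.trans hZW.subset⟩
      exact absurd (hZmax W hWT) (not_le.mpr (Finset.card_lt_card hZW))
    have hAX : A.sup id = X := by
      apply le_antisymm
      · exact Finset.sup_le fun Y hY => (hSX Y (hAS hY)).subset
      · refine hXS.trans (Finset.sup_le fun Y hY => ?_)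
        obtain ⟨Z, hZA, hYZ⟩ := hmax Y hY
        exact le_trans hYZ (Finset.le_sup (f := id) hZA)
    rcases Finset.eq_empty_or_nonempty A with hAe | hAne
    · have : S = ∅ := by
        rw [Finset.eq_empty_iff_forall_notMem]
        intro Y hY
        obtain ⟨Z, hZA, _⟩ := hmax Y hY
        simp [hAe] at hZA
      rw [this, Finset.sup_empty] at hXS
      exact hne (Finset.subset_empty.mp hXS ▸ hM hX)
    · by_cases hA2 : 2 ≤ A.card
      · have hanti : IsAntichainIn M A := by
          refine ⟨hAS.trans hSM, hA2, ?_⟩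
          intro Y hY Z hZ hYZ
          obtain ⟨hYS, hYm⟩ := Finset.mem_filter.mp hY
          obtain ⟨hZS, hZm⟩ := Finset.mem_filter.mp hZ
          constructor
          · exact fun h => hYm Z hZS (Finset.ssubset_iff_subset_ne.mpr ⟨h, hYZ⟩)
          · exact fun h => hZm Y hYS (Finset.ssubset_iff_subset_ne.mpr ⟨h, hYZ.symm⟩)
        have hmi := hmiss _ hanti
        rw [Misses, hAX] at hmi
        exact hmi (hM hX)
      · have h1 : A.card = 1 := le_antisymm (by omega) hAne.card_pos
        obtain ⟨Z, hZ⟩ := Finset.card_eq_one.mp h1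
        have hZS : Z ∈ S := hAS (hZ ▸ Finset.mem_singleton_self Z)
        have : Z = X := by rw [hZ] at hAX; simpa using hAX
        exact absurd (this ▸ hSX Z hZS) (lt_irrefl X)
  refine ⟨hdisj, ?_⟩
  rcases M.eq_empty_or_nonempty with rfl | ⟨X₀, hX₀⟩
  · simp
  obtain ⟨x₀, hx₀⟩ := hex X₀ hX₀
  classical
  set f : Finset α → α := fun X => if h : ∃ x, Superficial M X x then h.choose else x₀
    with hf
  have hfs : ∀ X ∈ M, Superficial M X (f X) := by
    intro X hX
    have h : ∃ x, Superficial M X x := hex X hX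
    simp only [hf, dif_pos h]
    exact h.choose_spec
  apply Finset.card_le_card_of_injOn f
  · intro X hX
    exact Finset.mem_sup.mpr ⟨X, hM hX, (hfs X hX).1⟩
  · intro X hX Y hY hfeq
    by_contra hne'
    exact Set.disjoint_left.mp (hdisj X hX Y hY hne') (hfs X hX) (hfeq ▸ hfs Y hY)
end

section
/- Let H be an ASC-hypergraph and M ⊆ H. Then every M-antichain misses H if and only if M is contained in some construction of H. -/
open HG Finset

namespace HGP

variable {α : Type*} [DecidableEq α]

lemma mem_carrier {G : Finset (Finset α)} {x : α} :
    x ∈ carrier G ↔ ∃ X ∈ G, x ∈ X := by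
  simp [carrier, Finset.mem_sup]

lemma subset_carrier {G : Finset (Finset α)} {X : Finset α} (hX : X ∈ G) :
    X ⊆ carrier G := Finset.le_sup (f := id) hX

/-- One step of a walk: two intersecting members of `G`. -/
def stepRel (G : Finset (Finset α)) (A B : Finset α) : Prop :=
  A ∈ G ∧ B ∈ G ∧ (A ∩ B).Nonempty

/-- Walk-reachability in `G`. -/
def reach (G : Finset (Finset α)) : Finset α → Finset α → Prop :=
  Relation.ReflTransGen (stepRel G)

lemma stepRel_symm {G : Finset (Finset α)} {A B : Finset α}
    (h : stepRel G A B) : stepRel G B A := by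
  obtain ⟨h1, h2, h3⟩ := h
  exact ⟨h2, h1, by rwa [Finset.inter_comm]⟩

lemma reach_symm {G : Finset (Finset α)} {A B : Finset α}
    (h : reach G A B) : reach G B A := by
  induction h with
  | refl => exact Relation.ReflTransGen.refl
  | tail _ hbc ih =>
      exact Relation.ReflTransGen.trans
        (Relation.ReflTransGen.single (stepRel_symm hbc)) ih

lemma reach_mono {G G' : Finset (Finset α)}
    (hsub : ∀ A ∈ G, ∀ B ∈ G, (A ∩ B).Nonempty → stepRel G' A B)
    {A B : Finset α} (h : reach G A B) : reach G' A B := by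
  induction h with
  | refl => exact Relation.ReflTransGen.refl
  | tail _ hbc ih =>
      exact Relation.ReflTransGen.tail ih (hsub _ hbc.1 _ hbc.2.1 hbc.2.2)

/-- In a saturated, walk-connected, nonempty family, the carrier is a member. -/
lemma carrier_mem {G : Finset (Finset α)}
    (hsat : ∀ A ∈ G, ∀ B ∈ G, (A ∩ B).Nonempty → A ∪ B ∈ G)
    (hne : G.Nonempty)
    (hreach : ∀ X ∈ G, ∀ Y ∈ G, reach G X Y) :
    carrier G ∈ G := by
  obtain ⟨U, hU, hUmax⟩ := G.exists_max_image (fun X => X.card) hne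
  have hsub : ∀ Y ∈ G, Y ⊆ U := by
    intro Y hY
    have h := hreach U hU Y hY
    induction h with
    | refl => exact le_refl U
    | tail hab hbc ih =>
        have hb : _ ⊆ U := ih hbc.1
        have hmeet : (U ∩ _).Nonempty := hbc.2.2.mono (Finset.inter_subset_inter hb (le_refl _))
        have hun : U ∪ _ ∈ G := hsat U hU _ hbc.2.1 hmeet
        have : U = U ∪ _ := Finset.eq_of_subset_of_card_le Finset.subset_union_left (hUmax _ hun)
        intro z hz
        rw [this]
        exact Finset.mem_union_right _ hz
  have : carrier G = U := le_antisymm (Finset.sup_le fun Y hY => hsub Y hY) (subset_carrier hU)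
  rwa [this]

/-- If the carrier is a member, the family is path-connected. -/
lemma conn_of_carrier_mem {G : Finset (Finset α)} (h : carrier G ∈ G) : Conn G := by
  intro x hx y hy
  exact ⟨carrier G, [], List.nodup_singleton _, by simpa using h, List.isChain_singleton _, hx, hy⟩

/-- From `Conn` derive pairwise walk-reachability of members. -/
lemma reach_of_conn {G : Finset (Finset α)} (hG : IsHypergraph G) (hc : Conn G) :
    ∀ X ∈ G, ∀ Y ∈ G, reach G X Y := by
  intro X hX Y hY
  have hXne : X.Nonempty := Finset.nonempty_iff_ne_empty.2 (fun h => hG (h ▸ hX))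
  have hYne : Y.Nonempty := Finset.nonempty_iff_ne_empty.2 (fun h => hG (h ▸ hY))
  obtain ⟨x, hx⟩ := hXne
  obtain ⟨y, hy⟩ := hYne
  obtain ⟨X0, l, _, hmem, hchain, hx0, hylast⟩ :=
    hc x (subset_carrier hX hx) y (subset_carrier hY hy)
  -- fold the chain into reach
  have key : ∀ (l : List (Finset α)) (A : Finset α), (∀ Z ∈ A :: l, Z ∈ G) →
      (A :: l).Chain' (fun A B => (A ∩ B).Nonempty) → A ∈ G →
      reach G A ((A :: l).getLast (List.cons_ne_nil A l)) := by
    intro l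
    induction l with
    | nil => intro A _ _ _; exact Relation.ReflTransGen.refl
    | cons B t ih =>
        intro A hmem hchain hA
        have hB : B ∈ G := hmem B (by simp)
        have hstep : stepRel G A B := ⟨hA, hB, (List.isChain_cons_cons.1 hchain).1⟩
        have := ih B (fun Z hZ => hmem Z (List.mem_cons_of_mem _ hZ))
          (List.isChain_cons_cons.1 hchain).2 hB
        have hlast : (A :: B :: t).getLast (List.cons_ne_nil _ _)
            = (B :: t).getLast (List.cons_ne_nil _ _) := by
          simp [List.getLast]
        rw [hlast]
        exact Relation.ReflTransGen.head hstep this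
  have hX0 : X0 ∈ G := hmem X0 (by simp)
  have h1 : reach G X X0 := Relation.ReflTransGen.single ⟨hX, hX0, ⟨x, Finset.mem_inter.2 ⟨hx, hx0⟩⟩⟩
  have h2 : reach G X0 _ := key l X0 hmem hchain hX0
  have hlastG : (X0 :: l).getLast (List.cons_ne_nil X0 l) ∈ G :=
    hmem _ (List.getLast_mem _)
  have h3 : reach G _ Y := Relation.ReflTransGen.single
    ⟨hlastG, hY, ⟨y, Finset.mem_inter.2 ⟨hylast, hy⟩⟩⟩
  exact (h1.trans h2).trans h3


/-- The connected component of `X` in `G`. -/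
noncomputable def comp (G : Finset (Finset α)) (X : Finset α) : Finset (Finset α) :=
  @Finset.filter _ (fun Y => reach G X Y) (Classical.decPred _) G

lemma mem_comp {G : Finset (Finset α)} {X Y : Finset α} :
    Y ∈ comp G X ↔ Y ∈ G ∧ reach G X Y := @Finset.mem_filter _ _ (Classical.decPred _) _ _

lemma comp_subset {G : Finset (Finset α)} {X : Finset α} : comp G X ⊆ G :=
  fun Y hY => (mem_comp.1 hY).1

lemma self_mem_comp {G : Finset (Finset α)} {X : Finset α} (hX : X ∈ G) :
    X ∈ comp G X := mem_comp.2 ⟨hX, Relation.ReflTransGen.refl⟩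

lemma comp_eq_of_reach {G : Finset (Finset α)} {X Y : Finset α}
    (h : reach G X Y) : comp G X = comp G Y := by
  ext Z
  simp only [mem_comp]
  exact ⟨fun ⟨hZ, hr⟩ => ⟨hZ, (reach_symm h).trans hr⟩,
    fun ⟨hZ, hr⟩ => ⟨hZ, h.trans hr⟩⟩

lemma reach_comp {G : Finset (Finset α)} {X A B : Finset α}
    (hA : A ∈ comp G X) (h : reach G A B) : reach (comp G X) A B := by
  have hXA : reach G X A := (mem_comp.1 hA).2
  induction h with
  | refl => exact Relation.ReflTransGen.refl
  | tail hab hbc ih =>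
      refine Relation.ReflTransGen.tail ih ⟨?_, ?_, hbc.2.2⟩
      · exact mem_comp.2 ⟨hbc.1, hXA.trans hab⟩
      · exact mem_comp.2 ⟨hbc.2.1, (hXA.trans hab).tail hbc⟩

lemma comp_saturated {G : Finset (Finset α)} (hG : IsHypergraph G) (hsat : Saturated G)
    {X : Finset α} :
    ∀ A ∈ comp G X, ∀ B ∈ comp G X, (A ∩ B).Nonempty → A ∪ B ∈ comp G X := by
  intro A hA B hB hmeet
  have hAG := (mem_comp.1 hA).1
  have hBG := (mem_comp.1 hB).1
  have hU : A ∪ B ∈ G := hsat A hAG B hBG hmeet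
  have hAne : A.Nonempty := Finset.nonempty_iff_ne_empty.2 (fun h => hG (h ▸ hAG))
  refine mem_comp.2 ⟨hU, (mem_comp.1 hA).2.tail ⟨hAG, hU, ?_⟩⟩
  obtain ⟨a, ha⟩ := hAne
  exact ⟨a, Finset.mem_inter.2 ⟨ha, Finset.mem_union_left _ ha⟩⟩

lemma comp_reach_all {G : Finset (Finset α)} {X : Finset α} :
    ∀ A ∈ comp G X, ∀ B ∈ comp G X, reach (comp G X) A B := by
  intro A hA B hB
  exact reach_comp hA ((reach_symm (mem_comp.1 hA).2).trans (mem_comp.1 hB).2)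

lemma comp_nonempty {G : Finset (Finset α)} {X : Finset α} (hX : X ∈ G) :
    (comp G X).Nonempty := ⟨X, self_mem_comp hX⟩

lemma comp_carrier_mem {G : Finset (Finset α)} (hG : IsHypergraph G) (hsat : Saturated G)
    {X : Finset α} (hX : X ∈ G) : carrier (comp G X) ∈ comp G X :=
  carrier_mem (comp_saturated hG hsat) (comp_nonempty hX) comp_reach_all

lemma comp_conn {G : Finset (Finset α)} (hG : IsHypergraph G) (hsat : Saturated G)
    {X : Finset α} (hX : X ∈ G) : Conn (comp G X) :=
  conn_of_carrier_mem (comp_carrier_mem hG hsat hX)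

lemma comp_eq_of_mem {G : Finset (Finset α)} {X Y Z : Finset α}
    (hZX : Z ∈ comp G X) (hZY : Z ∈ comp G Y) : comp G X = comp G Y := by
  rw [comp_eq_of_reach (mem_comp.1 hZX).2, comp_eq_of_reach (mem_comp.1 hZY).2]

lemma comp_carrier_disj {G : Finset (Finset α)} {X Y : Finset α}
    (hne : comp G X ≠ comp G Y) :
    Disjoint (carrier (comp G X)) (carrier (comp G Y)) := by
  rw [Finset.disjoint_left]
  intro z hzX hzY
  obtain ⟨A, hA, hzA⟩ := mem_carrier.1 hzX
  obtain ⟨B, hB, hzB⟩ := mem_carrier.1 hzY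
  have hstep : stepRel G A B :=
    ⟨(mem_comp.1 hA).1, (mem_comp.1 hB).1, ⟨z, Finset.mem_inter.2 ⟨hzA, hzB⟩⟩⟩
  have : B ∈ comp G X := mem_comp.2 ⟨hstep.2.1, (mem_comp.1 hA).2.tail hstep⟩
  exact hne (comp_eq_of_mem this hB)

/-- The component partition. -/
noncomputable def compPart (G : Finset (Finset α)) : Finset (Finset (Finset α)) :=
  G.image (fun X => comp G X)

lemma compPart_finest {G : Finset (Finset α)} (hG : IsHypergraph G) (hsat : Saturated G) :
    FinestHGPartition G (compPart G) := by
  constructor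
  · refine ⟨?_, ?_, ?_, ?_⟩
    · rintro Q hQ
      obtain ⟨X, hX, rfl⟩ := Finset.mem_image.1 hQ
      exact Finset.nonempty_iff_ne_empty.1 (comp_nonempty hX)
    · rintro Q hQ Q' hQ' hne
      obtain ⟨X, hX, rfl⟩ := Finset.mem_image.1 hQ
      obtain ⟨Y, hY, rfl⟩ := Finset.mem_image.1 hQ'
      rw [Finset.disjoint_left]
      intro Z hZX hZY
      exact hne (comp_eq_of_mem hZX hZY)
    · apply le_antisymm
      · exact Finset.sup_le fun Q hQ => by
          obtain ⟨X, hX, rfl⟩ := Finset.mem_image.1 hQ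
          exact comp_subset
      · intro X hX
        exact Finset.mem_sup.2 ⟨comp G X, Finset.mem_image_of_mem _ hX, self_mem_comp hX⟩
    · rintro Q hQ Q' hQ' hne
      obtain ⟨X, hX, rfl⟩ := Finset.mem_image.1 hQ
      obtain ⟨Y, hY, rfl⟩ := Finset.mem_image.1 hQ'
      exact comp_carrier_disj hne
  · rintro Q hQ
    obtain ⟨X, hX, rfl⟩ := Finset.mem_image.1 hQ
    exact comp_conn hG hsat hX

lemma conn_of_small {G : Finset (Finset α)} (h : (carrier G).card ≤ 1) : Conn G := by
  intro x hx y hy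
  have hxy : x = y := by
    have := Finset.card_le_one.1 h x hx y hy
    exact this
  obtain ⟨X, hX, hxX⟩ := mem_carrier.1 hx
  exact ⟨X, [], List.nodup_singleton _, by simpa using hX, List.isChain_singleton _,
    hxX, by simpa [List.getLast] using hxy ▸ hxX⟩

lemma compPart_two {G : Finset (Finset α)} (hG : IsHypergraph G) (hsat : Saturated G)
    (hnc : ¬ Conn G) : 2 ≤ (compPart G).card := by
  by_contra h
  push_neg at h
  apply hnc
  have hGne : G.Nonempty := by
    rcases Finset.eq_empty_or_nonempty G with rfl | hne
    · exact absurd (fun x hx => by simp [carrier] at hx) hnc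
    · exact hne
  obtain ⟨X, hX⟩ := hGne
  have hQ : comp G X ∈ compPart G := Finset.mem_image_of_mem _ hX
  have hsing : compPart G = {comp G X} := by
    apply Finset.eq_singleton_iff_unique_mem.2
    refine ⟨hQ, fun Q hQ' => ?_⟩
    by_contra hne
    have := Finset.one_lt_card.2 ⟨Q, hQ', comp G X, hQ, hne⟩
    omega
  have hsup := (compPart_finest hG hsat).1.2.2.1
  rw [hsing, Finset.sup_singleton] at hsup
  simp only [id_eq] at hsup
  rw [← hsup]
  exact comp_conn hG hsat hX


lemma carrier_mono {G G' : Finset (Finset α)} (h : G ⊆ G') : carrier G ⊆ carrier G' :=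
  Finset.sup_le fun X hX => subset_carrier (h hX)

lemma carrier_restrict_subset {H : Finset (Finset α)} {Y : Finset α} :
    carrier (restrict H Y) ⊆ Y := by
  intro a ha
  obtain ⟨X, hX, haX⟩ := mem_carrier.1 ha
  exact (Finset.mem_filter.1 hX).2 haX

lemma construction_bounds {H K : Finset (Finset α)} (h : IsConstruction H K) :
    ∀ X ∈ K, X.Nonempty ∧ X ⊆ carrier H := by
  induction h with
  | empty => intro X hX; exact absurd hX (Finset.notMem_empty _)
  | @conn H K x hne hconn hx hK ih =>
      intro X hX
      rcases Finset.mem_insert.1 hX with rfl | hX'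
      · exact ⟨hne, le_refl _⟩
      · obtain ⟨h1, h2⟩ := ih X hX'
        exact ⟨h1, h2.trans (carrier_restrict_subset.trans (Finset.erase_subset _ _))⟩
  | @parts H P K h2c hnc h2P hfin hKQ ih =>
      intro X hX
      obtain ⟨Q, hQ, hXQ⟩ := Finset.mem_sup.1 hX
      obtain ⟨h1, h2⟩ := ih Q hQ X hXQ
      refine ⟨h1, h2.trans (carrier_mono ?_)⟩
      rw [← hfin.1.2.2.1]
      exact Finset.le_sup (f := id) hQ

lemma construction_antichain {H K : Finset (Finset α)} (h : IsConstruction H K) :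
    ∀ S ⊆ K, 2 ≤ S.card → (∀ X ∈ S, ∀ Y ∈ S, X ≠ Y → ¬ X ⊆ Y ∧ ¬ Y ⊆ X) →
    S.sup id ∉ H := by
  induction h with
  | empty => intro S hS h2 _ h; exact absurd h (Finset.notMem_empty _)
  | @conn H K x hne hconn hx hK ih =>
      intro S hS h2 hinc
      by_cases hC : carrier H ∈ S
      · obtain ⟨Y, hYS, hYne⟩ := Finset.exists_mem_ne (s := S) (by omega) (carrier H)
        exfalso
        have hYK : Y ∈ K := by
          rcases Finset.mem_insert.1 (hS hYS) with h' | h'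
          · exact absurd h' hYne
          · exact h'
        have hYsub : Y ⊆ carrier H :=
          ((construction_bounds hK Y hYK).2).trans
            (carrier_restrict_subset.trans (Finset.erase_subset _ _))
        exact (hinc Y hYS (carrier H) hC hYne).1 hYsub
      · intro hmem
        have hSK : S ⊆ K := by
          intro Y hY
          rcases Finset.mem_insert.1 (hS hY) with h' | h'
          · exact absurd (h' ▸ hY) hC
          · exact h'
        have hsub : S.sup id ⊆ (carrier H).erase x :=
          Finset.sup_le fun Y hY => (construction_bounds hK Y (hSK hY)).2.trans
            carrier_restrict_subset
        exact ih S hSK h2 hinc (Finset.mem_filter.2 ⟨hmem, hsub⟩)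
  | @parts H P K h2c hnc h2P hfin hKQ ih =>
      intro S hS h2 hinc hmem
      have hSne : S.Nonempty := Finset.card_pos.1 (by omega)
      obtain ⟨X0, hX0⟩ := hSne
      obtain ⟨Q0, hQ0, hX0Q0⟩ := Finset.mem_sup.1 (hS hX0)
      have hsupH : S.sup id ∈ P.sup id := by rw [hfin.1.2.2.1]; exact hmem
      obtain ⟨Q', hQ', hsupQ'⟩ := Finset.mem_sup.1 hsupH
      have hsupQ'c : S.sup id ⊆ carrier Q' := subset_carrier hsupQ'
      have hX0sup : X0 ⊆ S.sup id := Finset.le_sup (f := id) hX0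
      have hX0ne : X0.Nonempty := (construction_bounds (hKQ Q0 hQ0) X0 hX0Q0).1
      have hX0c0 : X0 ⊆ carrier Q0 := (construction_bounds (hKQ Q0 hQ0) X0 hX0Q0).2
      have hQ'Q0 : Q' = Q0 := by
        by_contra hne
        have hdisj := hfin.1.2.2.2 Q' hQ' Q0 hQ0 hne
        obtain ⟨a, ha⟩ := hX0ne
        exact Finset.disjoint_left.1 hdisj (hsupQ'c (hX0sup ha)) (hX0c0 ha)
      by_cases hall : S ⊆ K Q0
      · exact ih Q0 hQ0 S hall h2 hinc (hQ'Q0 ▸ hsupQ')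
      · obtain ⟨Y, hYS, hYn⟩ := Finset.not_subset.1 hall
        obtain ⟨Q1, hQ1, hYQ1⟩ := Finset.mem_sup.1 (hS hYS)
        have hQ10 : Q1 ≠ Q0 := fun h => hYn (h ▸ hYQ1)
        have hYne : Y.Nonempty := (construction_bounds (hKQ Q1 hQ1) Y hYQ1).1
        have hYc1 : Y ⊆ carrier Q1 := (construction_bounds (hKQ Q1 hQ1) Y hYQ1).2
        have hQ'Q1 : Q' = Q1 := by
          by_contra hne
          have hdisj := hfin.1.2.2.2 Q' hQ' Q1 hQ1 hne
          obtain ⟨a, ha⟩ := hYne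
          exact Finset.disjoint_left.1 hdisj (hsupQ'c (Finset.le_sup (f := id) hYS ha)) (hYc1 ha)
        exact hQ10 (hQ'Q1 ▸ hQ'Q0 ▸ rfl)


lemma exists_superficial {H M : Finset (Finset α)} (hM : M ⊆ H)
    (hC : carrier H ∈ H) (hcne : (carrier H).Nonempty)
    (hanti : ∀ S, IsAntichainIn M S → Misses H S) :
    ∃ x ∈ carrier H, ∀ Y ∈ M, Y ⊂ carrier H → x ∉ Y := by
  by_contra hcon
  push_neg at hcon
  set N := M.filter (· ⊂ carrier H) with hN
  have hNmem : ∀ Y, Y ∈ N ↔ Y ∈ M ∧ Y ⊂ carrier H := fun Y => Finset.mem_filter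
  set S := N.filter (fun Y => ∀ Z ∈ N, ¬ Y ⊂ Z) with hSdef
  have hSmem : ∀ Y, Y ∈ S ↔ Y ∈ N ∧ ∀ Z ∈ N, ¬ Y ⊂ Z := fun Y => Finset.mem_filter
  have hup : ∀ Y ∈ N, ∃ Z ∈ S, Y ⊆ Z := by
    intro Y hY
    obtain ⟨Z, hZT, hZmax⟩ := (N.filter (Y ⊆ ·)).exists_max_image (fun X => X.card)
      ⟨Y, Finset.mem_filter.2 ⟨hY, le_refl Y⟩⟩
    obtain ⟨hZN, hYZ⟩ := Finset.mem_filter.1 hZT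
    refine ⟨Z, (hSmem Z).2 ⟨hZN, ?_⟩, hYZ⟩
    intro Z' hZ' hss
    have : Z' ∈ N.filter (Y ⊆ ·) := Finset.mem_filter.2 ⟨hZ', hYZ.trans hss.subset⟩
    exact absurd (hZmax Z' this) (not_le.2 (Finset.card_lt_card hss))
  have hNne : N.Nonempty := by
    obtain ⟨x0, hx0⟩ := hcne
    obtain ⟨Y, hYM, hYss, _⟩ := hcon x0 hx0
    exact ⟨Y, (hNmem Y).2 ⟨hYM, hYss⟩⟩
  have hSne : S.Nonempty := by
    obtain ⟨Y, hY⟩ := hNne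
    obtain ⟨Z, hZ, _⟩ := hup Y hY
    exact ⟨Z, hZ⟩
  have hsupS : S.sup id = carrier H := by
    apply le_antisymm
    · exact Finset.sup_le fun Z hZ => ((hNmem Z).1 ((hSmem Z).1 hZ).1).2.subset
    · intro a ha
      obtain ⟨Y, hYM, hYss, haY⟩ := hcon a ha
      obtain ⟨Z, hZ, hYZ⟩ := hup Y ((hNmem Y).2 ⟨hYM, hYss⟩)
      exact Finset.mem_sup.2 ⟨Z, hZ, hYZ haY⟩
  have h2 : 2 ≤ S.card := by
    obtain ⟨Z, hZ⟩ := hSne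
    by_contra h
    push_neg at h
    have hsing : S = {Z} := by
      apply Finset.eq_singleton_iff_unique_mem.2
      exact ⟨hZ, fun W hW => Finset.card_le_one.1 (by omega) W hW Z hZ⟩
    have : Z = carrier H := by rw [← hsupS, hsing]; simp
    exact absurd this (ne_of_lt ((hNmem Z).1 ((hSmem Z).1 hZ).1).2)
  have hSanti : IsAntichainIn M S := by
    refine ⟨fun Z hZ => ((hNmem Z).1 ((hSmem Z).1 hZ).1).1, h2, ?_⟩
    intro X hX Y hY hne
    constructor
    · intro hsub
      exact ((hSmem X).1 hX).2 Y ((hSmem Y).1 hY).1 (lt_of_le_of_ne hsub hne)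
    · intro hsub
      exact ((hSmem Y).1 hY).2 X ((hSmem X).1 hX).1 (lt_of_le_of_ne hsub (Ne.symm hne))
  exact hanti S hSanti (hsupS ▸ hC)

lemma fwd : ∀ (n : ℕ) (H M : Finset (Finset α)), (carrier H).card ≤ n →
    IsHypergraph H → Atomic H → Saturated H → M ⊆ H →
    (∀ S, IsAntichainIn M S → Misses H S) →
    ∃ K, IsConstruction H K ∧ M ⊆ K := by
  intro n
  induction n with
  | zero =>
      intro H M hcard hHy _ _ hM _
      have hHe : H = ∅ := by
        rcases Finset.eq_empty_or_nonempty H with rfl | ⟨X, hX⟩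
        · rfl
        · exfalso
          have hXne : X.Nonempty := Finset.nonempty_iff_ne_empty.2 (fun h => hHy (h ▸ hX))
          obtain ⟨a, ha⟩ := hXne
          have : a ∈ carrier H := subset_carrier hX ha
          have := Finset.card_pos.2 ⟨a, this⟩
          omega
      subst hHe
      exact ⟨∅, IsConstruction.empty, by rwa [Finset.subset_empty] at hM ⊢⟩
  | succ n ih =>
      intro H M hcard hHy hat hsat hM hanti
      rcases Finset.eq_empty_or_nonempty H with rfl | hHne
      · exact ⟨∅, IsConstruction.empty, by rwa [Finset.subset_empty] at hM ⊢⟩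
      have hcne : (carrier H).Nonempty := by
        obtain ⟨X, hX⟩ := hHne
        have hXne : X.Nonempty := Finset.nonempty_iff_ne_empty.2 (fun h => hHy (h ▸ hX))
        obtain ⟨a, ha⟩ := hXne
        exact ⟨a, subset_carrier hX ha⟩
      by_cases hc : Conn H
      · -- connected case
        have hCH : carrier H ∈ H := carrier_mem hsat hHne (reach_of_conn hHy hc)
        obtain ⟨x, hx, hxsup⟩ := exists_superficial hM hCH hcne hanti
        set H' := restrict H ((carrier H).erase x) with hH'def
        have hH'mem : ∀ Y, Y ∈ H' ↔ Y ∈ H ∧ Y ⊆ (carrier H).erase x :=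
          fun Y => Finset.mem_filter
        set M' := M.erase (carrier H) with hM'def
        have hM'sub : M' ⊆ H' := by
          intro Y hY
          have hYM : Y ∈ M := Finset.mem_of_mem_erase hY
          have hYne : Y ≠ carrier H := Finset.ne_of_mem_erase hY
          have hYss : Y ⊂ carrier H := lt_of_le_of_ne (subset_carrier (hM hYM)) hYne
          have hxY : x ∉ Y := hxsup Y hYM hYss
          refine (hH'mem Y).2 ⟨hM hYM, fun a ha => Finset.mem_erase.2 ⟨?_, hYss.subset ha⟩⟩
          exact fun h => hxY (h ▸ ha)
        have hH'y : IsHypergraph H' := fun h => hHy ((hH'mem ∅).1 h).1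
        have hH'at : Atomic H' := by
          intro y hy
          have hy' : y ∈ (carrier H).erase x := carrier_restrict_subset hy
          have : ({y} : Finset α) ∈ H := hat y (Finset.mem_of_mem_erase hy')
          exact (hH'mem {y}).2 ⟨this, Finset.singleton_subset_iff.2 hy'⟩
        have hH'sat : Saturated H' := by
          intro A hA B hB hmeet
          obtain ⟨hAH, hAsub⟩ := (hH'mem A).1 hA
          obtain ⟨hBH, hBsub⟩ := (hH'mem B).1 hB
          exact (hH'mem _).2 ⟨hsat A hAH B hBH hmeet, Finset.union_subset hAsub hBsub⟩
        have hanti' : ∀ S, IsAntichainIn M' S → Misses H' S := by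
          intro S hS
          have : IsAntichainIn M S := ⟨hS.1.trans (Finset.erase_subset _ _), hS.2.1, hS.2.2⟩
          exact fun h => hanti S this (((hH'mem _).1 h).1)
        have hcard' : (carrier H').card ≤ n := by
          have h1 : carrier H' ⊆ (carrier H).erase x := carrier_restrict_subset
          have h2 : ((carrier H).erase x).card < (carrier H).card :=
            Finset.card_erase_lt_of_mem hx
          have := Finset.card_le_card h1
          omega
        obtain ⟨K', hK', hMK'⟩ := ih H' M' hcard' hH'y hH'at hH'sat hM'sub hanti'
        refine ⟨insert (carrier H) K', IsConstruction.conn hcne hc hx hK', ?_⟩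
        intro Y hY
        by_cases hYC : Y = carrier H
        · exact hYC ▸ Finset.mem_insert_self _ _
        · exact Finset.mem_insert_of_mem (hMK' (Finset.mem_erase.2 ⟨hYC, hY⟩))
      · -- disconnected case
        have hfin := compPart_finest hHy hsat
        have h2P := compPart_two hHy hsat hc
        have h2c : 2 ≤ (carrier H).card := by
          by_contra h
          exact hc (conn_of_small (by omega))
        have hQall : ∀ Q ∈ compPart H, ∃ K, IsConstruction Q K ∧ M ∩ Q ⊆ K := by
          intro Q hQ
          obtain ⟨X, hX, rfl⟩ := Finset.mem_image.1 hQ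
          have hQH : comp H X ⊆ H := comp_subset
          have hQy : IsHypergraph (comp H X) := fun h => hHy (hQH h)
          have hQat : Atomic (comp H X) := by
            intro y hy
            obtain ⟨A, hA, hyA⟩ := mem_carrier.1 hy
            have hyH : ({y} : Finset α) ∈ H := hat y (subset_carrier (hQH hA) hyA)
            refine mem_comp.2 ⟨hyH, (mem_comp.1 hA).2.tail ⟨(mem_comp.1 hA).1, hyH, ?_⟩⟩
            exact ⟨y, Finset.mem_inter.2 ⟨hyA, Finset.mem_singleton_self y⟩⟩
          have hQsat : Saturated (comp H X) := comp_saturated hHy hsat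
          have hanti' : ∀ S, IsAntichainIn (M ∩ comp H X) S → Misses (comp H X) S := by
            intro S hS
            have : IsAntichainIn M S :=
              ⟨hS.1.trans Finset.inter_subset_left, hS.2.1, hS.2.2⟩
            exact fun h => hanti S this (hQH h)
          have hcard' : (carrier (comp H X)).card ≤ n := by
            obtain ⟨Q', hQ', hQ'ne⟩ :=
              Finset.exists_mem_ne (s := compPart H) (by omega) (comp H X)
            have hQ'nee : Q'.Nonempty :=
              Finset.nonempty_iff_ne_empty.2 (hfin.1.1 Q' hQ')
            obtain ⟨B, hB⟩ := hQ'nee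
            have hBH : B ∈ H := by
              have : Q' ⊆ H := by
                rw [← hfin.1.2.2.1]
                exact fun Z hZ => Finset.mem_sup.2 ⟨Q', hQ', hZ⟩
              exact this hB
            have hBne : B.Nonempty := Finset.nonempty_iff_ne_empty.2 (fun h => hHy (h ▸ hBH))
            obtain ⟨b, hb⟩ := hBne
            have hbQ' : b ∈ carrier Q' := subset_carrier hB hb
            have hbnQ : b ∉ carrier (comp H X) := by
              intro hbQ
              have hdisj := hfin.1.2.2.2 Q' hQ' (comp H X) hQ hQ'ne
              exact Finset.disjoint_left.1 hdisj hbQ' hbQ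
            have hss : carrier (comp H X) ⊂ carrier H := by
              refine lt_of_le_of_ne (carrier_mono hQH) ?_
              intro h
              exact hbnQ (h ▸ subset_carrier hBH hb)
            have := Finset.card_lt_card hss
            omega
          exact ih (comp H X) (M ∩ comp H X) hcard' hQy hQat hQsat
            Finset.inter_subset_right hanti'
        have hex : ∀ Q, ∃ K, Q ∈ compPart H → IsConstruction Q K ∧ M ∩ Q ⊆ K := by
          intro Q
          by_cases hQ : Q ∈ compPart H
          · obtain ⟨K, hK⟩ := hQall Q hQ
            exact ⟨K, fun _ => hK⟩
          · exact ⟨∅, fun h => absurd h hQ⟩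
        choose Kf hKf using hex
        refine ⟨(compPart H).sup Kf,
          IsConstruction.parts h2c hc h2P hfin (fun Q hQ => (hKf Q hQ).1), ?_⟩
        intro Y hY
        have hYH : Y ∈ H := hM hY
        have : Y ∈ (compPart H).sup id := by rwa [hfin.1.2.2.1]
        obtain ⟨Q, hQ, hYQ⟩ := Finset.mem_sup.1 this
        exact Finset.mem_sup.2 ⟨Q, hQ, (hKf Q hQ).2 (Finset.mem_inter.2 ⟨hY, hYQ⟩)⟩

end HGP

open HG

theorem antichains_miss_iff_subset_construction
    {α : Type*} [DecidableEq α]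
    (H M : Finset (Finset α)) (hH : ASC H) (hM : M ⊆ H) :
    (∀ S, IsAntichainIn M S → Misses H S) ↔ ∃ K, IsConstruction H K ∧ M ⊆ K := by
  obtain ⟨hHy, hat, hsat, _⟩ := hH
  constructor
  · intro hanti
    exact HGP.fwd (carrier H).card H M le_rfl hHy hat hsat hM hanti
  · rintro ⟨K, hK, hMK⟩ S hS
    exact HGP.construction_antichain hK S (hS.1.trans hMK) hS.2.1 hS.2.2
end

section
/- If K is a construction of the ASC-hypergraph H and Y ∈ H \ K, then there exists X ∈ K with Y ⊊ X such that the X-superficial element x of K belongs to Y. -/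
open HG

namespace HG

variable {α : Type*} [DecidableEq α]

lemma subset_carrier {H : Finset (Finset α)} {X : Finset α} (h : X ∈ H) :
    X ⊆ carrier H := Finset.le_sup (f := id) h

lemma mem_carrier_s16 {H : Finset (Finset α)} {z : α} :
    z ∈ carrier H ↔ ∃ W ∈ H, z ∈ W := by
  simp [carrier, Finset.mem_sup]

lemma carrier_restrict_subset (H : Finset (Finset α)) (S : Finset α) :
    carrier (restrict H S) ⊆ S := by
  intro z hz
  rcases mem_carrier_s16.mp hz with ⟨W, hW, hzW⟩
  exact (Finset.mem_filter.mp hW).2 hzW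

lemma construction_mem_subset {H K : Finset (Finset α)}
    (hK : IsConstruction H K) : ∀ X ∈ K, X ⊆ carrier H := by
  induction hK with
  | empty => simp
  | @conn H K x hne hconn hx hK ih =>
      intro X hX
      rcases Finset.mem_insert.mp hX with h | h
      · exact h ▸ le_refl _
      · exact (ih X h).trans ((carrier_restrict_subset _ _).trans
          (Finset.erase_subset _ _))
  | @parts H P Kf hcard hnconn hP hFP hQ ih =>
      intro X hX
      rcases Finset.mem_sup.mp hX with ⟨Q, hQP, hXQ⟩
      refine (ih Q hQP X hXQ).trans ?_
      intro z hz
      rcases mem_carrier_s16.mp hz with ⟨W, hW, hzW⟩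
      refine subset_carrier ?_ hzW
      rw [← hFP.1.2.2.1]
      exact Finset.mem_sup.mpr ⟨Q, hQP, hW⟩

lemma construction_carrier_subset {H K : Finset (Finset α)}
    (hK : IsConstruction H K) : carrier H ⊆ K.sup id := by
  induction hK with
  | empty => simp [carrier]
  | @conn H K x hne hconn hx hK ih =>
      intro z hz
      exact Finset.mem_sup.mpr ⟨carrier H, Finset.mem_insert_self _ _, hz⟩
  | @parts H P Kf hcard hnconn hP hFP hQ ih =>
      intro z hz
      rcases mem_carrier_s16.mp hz with ⟨W, hW, hzW⟩
      rw [← hFP.1.2.2.1] at hW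
      rcases Finset.mem_sup.mp hW with ⟨Q, hQP, hWQ⟩
      have hz' : z ∈ carrier Q := mem_carrier_s16.mpr ⟨W, hWQ, hzW⟩
      have := ih Q hQP hz'
      rcases Finset.mem_sup.mp this with ⟨X, hXK, hzX⟩
      exact Finset.mem_sup.mpr ⟨X, Finset.mem_sup.mpr ⟨Q, hQP, hXK⟩, hzX⟩

lemma superficial_mono {K K' : Finset (Finset α)} {X : Finset α} {x : α}
    (h : K' ⊆ K) (hs : Superficial K X x) : Superficial K' X x :=
  ⟨hs.1, fun Y hY => hs.2 Y (h hY)⟩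

lemma main_lemma {H K : Finset (Finset α)} (hK : IsConstruction H K) :
    Atomic H → ∀ Y ∈ H, Y ∉ K →
      ∃ X ∈ K, Y ⊂ X ∧ ∀ x, Superficial K X x → x ∈ Y := by
  induction hK with
  | empty => intro _ Y hY _; simp at hY
  | @conn H K x hne hconn hx hK ih =>
      intro hAt Y hY hYK
      set H' := restrict H ((carrier H).erase x) with hH'
      have hAt' : Atomic H' := by
        intro z hz
        have hz' : z ∈ (carrier H).erase x := carrier_restrict_subset _ _ hz
        have hsing : {z} ∈ H := hAt z (Finset.mem_of_mem_erase hz')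
        exact Finset.mem_filter.mpr ⟨hsing, by simpa using hz'⟩
      by_cases hxY : x ∈ Y
      · refine ⟨carrier H, Finset.mem_insert_self _ _, ?_, ?_⟩
        · refine Finset.ssubset_iff_subset_ne.mpr ⟨subset_carrier hY, ?_⟩
          intro h; exact hYK (h ▸ Finset.mem_insert_self _ _)
        · rintro z ⟨hzC, hsup⟩
          by_contra hzY
          have hzx : z ≠ x := fun h => hzY (h ▸ hxY)
          have hzE : z ∈ (carrier H).erase x := Finset.mem_erase.mpr ⟨hzx, hzC⟩
          have hzH' : z ∈ carrier H' := by
            apply mem_carrier_s16.mpr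
            exact ⟨{z}, Finset.mem_filter.mpr ⟨hAt z hzC, by simpa using hzE⟩,
              Finset.mem_singleton_self z⟩
          have := construction_carrier_subset hK hzH'
          rcases Finset.mem_sup.mp this with ⟨W, hWK, hzW⟩
          have hWsub : W ⊂ carrier H := by
            refine Finset.ssubset_iff_subset_ne.mpr
              ⟨(construction_mem_subset hK W hWK).trans
                ((carrier_restrict_subset _ _).trans (Finset.erase_subset _ _)), ?_⟩
            intro h
            have hxW : x ∉ W := by
              intro hxW
              have := (construction_mem_subset hK W hWK).trans
                (carrier_restrict_subset _ _) hxW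
              exact (Finset.mem_erase.mp this).1 rfl
            exact hxW (h ▸ hx)
          exact hsup W (Finset.mem_insert_of_mem hWK) hWsub hzW
      · have hYH' : Y ∈ H' := by
          refine Finset.mem_filter.mpr ⟨hY, ?_⟩
          intro z hz
          exact Finset.mem_erase.mpr ⟨fun h => hxY (h ▸ hz), subset_carrier hY hz⟩
        have hYK' : Y ∉ K := fun h => hYK (Finset.mem_insert_of_mem h)
        rcases ih hAt' Y hYH' hYK' with ⟨X, hXK, hYX, hsup⟩
        refine ⟨X, Finset.mem_insert_of_mem hXK, hYX, ?_⟩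
        intro z hz
        exact hsup z (superficial_mono (Finset.subset_insert _ _) hz)
  | @parts H P Kf hcard hnconn hP hFP hQ ih =>
      intro hAt Y hY hYK
      have hY' : Y ∈ P.sup id := hFP.1.2.2.1 ▸ hY
      rcases Finset.mem_sup.mp hY' with ⟨Q, hQP, hYQ⟩
      have hsub : Kf Q ⊆ P.sup Kf := Finset.le_sup hQP
      have hYKQ : Y ∉ Kf Q := fun h => hYK (hsub h)
      have hAtQ : Atomic Q := by
        intro z hz
        rcases mem_carrier_s16.mp hz with ⟨W, hWQ, hzW⟩
        have hWH : W ∈ H := hFP.1.2.2.1 ▸ Finset.mem_sup.mpr ⟨Q, hQP, hWQ⟩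
        have hsing : {z} ∈ H := hAt z (subset_carrier hWH hzW)
        have : {z} ∈ P.sup id := hFP.1.2.2.1 ▸ hsing
        rcases Finset.mem_sup.mp this with ⟨Q', hQ'P, hsQ'⟩
        by_cases hQQ' : Q = Q'
        · exact hQQ' ▸ hsQ'
        · exfalso
          have hd := hFP.1.2.2.2 Q hQP Q' hQ'P hQQ'
          have h1 : z ∈ carrier Q := hz
          have h2 : z ∈ carrier Q' := subset_carrier hsQ' (Finset.mem_singleton_self z)
          exact Finset.disjoint_left.mp hd h1 h2
      rcases ih Q hQP hAtQ Y hYQ hYKQ with ⟨X, hXK, hYX, hsup⟩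
      refine ⟨X, hsub hXK, hYX, ?_⟩
      intro z hz
      exact hsup z (superficial_mono hsub hz)

end HG


theorem mem_diff_construction_superficial
    {α : Type*} [DecidableEq α]
    (H K : Finset (Finset α)) (hH : ASC H) (hK : IsConstruction H K)
    (Y : Finset α) (hY : Y ∈ H) (hYK : Y ∉ K) :
    ∃ X ∈ K, Y ⊂ X ∧ ∀ x, Superficial K X x → x ∈ Y := by
  exact HG.main_lemma hK hH.2.1 Y hY hYK
end

section
/- If L is a construction of the ASC-hypergraph H and Y ∈ L, then L_Y = {X ∈ L ∣ X ⊆ Y} is a construction of the ASC-hypergraph H_Y = {X ∈ H ∣ X ⊆ Y}. -/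
open HG


section Aux

variable {α : Type*} [DecidableEq α]

lemma HG.subset_carrier_s17 {H : Finset (Finset α)} {X : Finset α} (h : X ∈ H) :
    X ⊆ carrier H := Finset.le_sup (f := id) h

lemma HG.carrier_mono_s17 {H K : Finset (Finset α)} (h : H ⊆ K) :
    carrier H ⊆ carrier K := Finset.le_iff_subset.mp (Finset.sup_mono h)

lemma HG.construction_mem_subset_s17 {H L : Finset (Finset α)} (hL : IsConstruction H L) :
    ∀ Z ∈ L, Z ⊆ carrier H ∧ Z.Nonempty := by
  induction hL with
  | empty => simp
  | @conn H K x hne hc hx _ ih =>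
    intro Z hZ
    rcases Finset.mem_insert.mp hZ with rfl | hZ
    · exact ⟨le_rfl, hne⟩
    · obtain ⟨h1, h2⟩ := ih Z hZ
      exact ⟨h1.trans (HG.carrier_mono_s17 (Finset.filter_subset _ _)), h2⟩
  | @parts H P K h2 hnc hP hfp hK ih =>
    intro Z hZ
    obtain ⟨Q, hQ, hZQ⟩ := Finset.mem_sup.mp hZ
    obtain ⟨h1, h2⟩ := ih Q hQ Z hZQ
    have hQH : Q ⊆ H := by
      have := hfp.1.2.2.1
      rw [← this]
      exact HG.subset_carrier_s17 hQ
    exact ⟨h1.trans (HG.carrier_mono_s17 hQH), h2⟩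

lemma HG.restrict_construction_aux {H L : Finset (Finset α)} (hL : IsConstruction H L)
    (hE : ∅ ∉ H) : ∀ Y ∈ L, IsConstruction (restrict H Y) (restrict L Y) := by
  induction hL with
  | empty => simp
  | @conn H K x hne hc hx hsub ih =>
    intro Y hY
    by_cases hYC : Y = carrier H
    · have e1 : restrict H Y = H := by
        rw [hYC]
        apply Finset.filter_true_of_mem
        intro X hX
        exact HG.subset_carrier_s17 hX
      have e2 : restrict (insert (carrier H) K) Y = insert (carrier H) K := by
        rw [hYC]
        apply Finset.filter_true_of_mem
        intro Z hZ
        exact (HG.construction_mem_subset_s17 (IsConstruction.conn hne hc hx hsub) Z hZ).1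
      rw [e1, e2]
      exact IsConstruction.conn hne hc hx hsub
    · have hYK : Y ∈ K := by
        rcases Finset.mem_insert.mp hY with h | h
        · exact absurd h hYC
        · exact h
      have hYc : Y ⊆ carrier (restrict H ((carrier H).erase x)) :=
        (HG.construction_mem_subset_s17 hsub Y hYK).1
      have hYe : Y ⊆ (carrier H).erase x := by
        refine hYc.trans (Finset.sup_le ?_)
        intro X hX
        exact (Finset.mem_filter.mp hX).2
      have e2 : restrict (insert (carrier H) K) Y = restrict K Y := by
        unfold HG.restrict
        rw [Finset.filter_insert]
        split_ifs with h
        · exfalso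
          have : x ∈ (carrier H).erase x := hYe (h hx)
          simp at this
        · rfl
      have e1 : restrict (restrict H ((carrier H).erase x)) Y = restrict H Y := by
        unfold HG.restrict
        rw [Finset.filter_filter]
        apply Finset.filter_congr
        intro X _
        constructor
        · exact fun h => h.2
        · exact fun h => ⟨h.trans hYe, h⟩
      have hE' : ∅ ∉ restrict H ((carrier H).erase x) := by
        intro h
        exact hE (Finset.mem_filter.mp h).1
      rw [e2, ← e1]
      exact ih hE' Y hYK
  | @parts H P K h2 hnc hP hfp hK ih =>
    intro Y hY
    obtain ⟨Q, hQ, hYQ⟩ := Finset.mem_sup.mp hY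
    have hPH : P.sup id = H := hfp.1.2.2.1
    have hQH : Q ⊆ H := by rw [← hPH]; exact HG.subset_carrier_s17 hQ
    have hYc : Y ⊆ carrier Q := (HG.construction_mem_subset_s17 (hK Q hQ) Y hYQ).1
    have hEQ : ∅ ∉ Q := fun h => hE (hQH h)
    -- key disjointness: any nonempty Z ⊆ carrier Q' with Q' ≠ Q can't be ⊆ Y
    have key : ∀ Q' ∈ P, Q' ≠ Q → ∀ Z : Finset α, Z ⊆ carrier Q' → Z.Nonempty → ¬ Z ⊆ Y := by
      intro Q' hQ' hne Z hZc hZne hZY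
      have hdisj := hfp.1.2.2.2 Q' hQ' Q hQ hne
      obtain ⟨a, ha⟩ := hZne
      exact (Finset.disjoint_left.mp hdisj) (hZc ha) (hYc (hZY ha))
    have e1 : restrict H Y = restrict Q Y := by
      ext X
      simp only [HG.restrict, Finset.mem_filter]
      constructor
      · rintro ⟨hXH, hXY⟩
        obtain ⟨Q', hQ', hXQ'⟩ := Finset.mem_sup.mp (by rw [hPH]; exact hXH :
          X ∈ P.sup id)
        by_cases hqq : Q' = Q
        · subst hqq; exact ⟨hXQ', hXY⟩
        · exfalso
          have hXne : X.Nonempty := Finset.nonempty_iff_ne_empty.mpr (fun h => hE (h ▸ hXH))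
          exact key Q' hQ' hqq X (HG.subset_carrier_s17 hXQ') hXne hXY
      · rintro ⟨hXQ, hXY⟩
        exact ⟨hQH hXQ, hXY⟩
    have e2 : restrict (P.sup K) Y = restrict (K Q) Y := by
      ext X
      simp only [HG.restrict, Finset.mem_filter]
      constructor
      · rintro ⟨hXL, hXY⟩
        obtain ⟨Q', hQ', hXQ'⟩ := Finset.mem_sup.mp hXL
        by_cases hqq : Q' = Q
        · subst hqq; exact ⟨hXQ', hXY⟩
        · exfalso
          obtain ⟨hc, hne⟩ := HG.construction_mem_subset_s17 (hK Q' hQ') X hXQ'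
          exact key Q' hQ' hqq X hc hne hXY
      · rintro ⟨hXQ, hXY⟩
        exact ⟨Finset.mem_sup.mpr ⟨Q, hQ, hXQ⟩, hXY⟩
    rw [e1, e2]
    exact ih Q hQ hEQ Y hYQ

end Aux

theorem restrict_construction
    {α : Type*} [DecidableEq α]
    (H L : Finset (Finset α)) (hH : ASC H) (hL : IsConstruction H L)
    (Y : Finset α) (hY : Y ∈ L) :
    IsConstruction (restrict H Y) (restrict L Y) :=
  HG.restrict_construction_aux hL hH.1 Y hY
end
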